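/- Fix p with 1 < p ≤ 2 and two nested relaxation intervals: 0 < η₋ ≤ ε₋ ≤ ε₊ ≤ η₊ < ∞ (so [ε₋, ε₊] ⊆ [η₋, η₊]). Then for every t ≥ 0 one has κ_η(t) ≤ κ_ε(t), i.e. the relaxed integrand κ_ε is pointwise monotonically decreasing with respect to enlarging the relaxation interval. -/

import Mathlib

/-- The relaxed integrand `κ_ε`. -/
noncomputable def kappaEps (p εm εp t : ℝ) : ℝ :=
  if t ≤ εm then (1 / 2) * εm ^ (p - 2) * t ^ 2 + (1 / p - 1 / 2) * εm ^ p
  else if t ≤ εp then (1 / p) * t ^ p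
  else (1 / 2) * εp ^ (p - 2) * t ^ 2 + (1 / p - 1 / 2) * εp ^ p

/-!
Both quadratic branches of `κ_ε(t)` are `g_t(ε)` with `g_t(x) = ½ x^{p-2} t² + (1/p − 1/2) x^p`,
evaluated at the cut-off `ε₋` resp. `ε₊`, and the middle branch is `g_t(t) = t^p / p`; hence
`κ_ε(t) = g_t(c_ε(t))` where `c_ε(t)` is `t` clamped to `[ε₋, ε₊]`. Since
`g_t'(x) = (2 − p)/2 · x^{p-3} (x² − t²)`, `g_t` decreases on `(0, t]` and increases on `[t, ∞)`.
Clamping to the larger interval `[η₋, η₊]` moves `t` less, so `c_η(t)` lies between `t` and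
`c_ε(t)`, whence `g_t(c_η(t)) ≤ g_t(c_ε(t))`.
-/

open Set

noncomputable def kappaQuad (p t x : ℝ) : ℝ :=
  (1 / 2) * x ^ (p - 2) * t ^ 2 + (1 / p - 1 / 2) * x ^ p

section kappaQuad

variable {p t x : ℝ}

lemma hasDerivAt_kappaQuad (hp : p ≠ 0) (hx : 0 < x) :
    HasDerivAt (kappaQuad p t) ((2 - p) / 2 * (x ^ (p - 3) * (x ^ 2 - t ^ 2))) x := by
  have hpow₁ := Real.hasDerivAt_rpow_const (p := p - 2) (Or.inl hx.ne')
  have hpow₂ := Real.hasDerivAt_rpow_const (p := p) (Or.inl hx.ne')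
  refine (((hpow₁.const_mul (1 / 2)).mul_const (t ^ 2)).add
    (hpow₂.const_mul (1 / p - 1 / 2))).congr_deriv ?_
  rw [show p - 2 - 1 = p - 3 by ring, show p - 1 = (p - 3) + 2 by ring, Real.rpow_add hx,
    Real.rpow_two]
  field_simp
  ring

lemma kappaQuad_self (ht : 0 < t) : kappaQuad p t t = 1 / p * t ^ p := by
  have hpow : t ^ (p - 2) * t ^ 2 = t ^ p := by
    rw [← Real.rpow_two, ← Real.rpow_add ht, sub_add_cancel]
  unfold kappaQuad
  linear_combination (1 / 2 : ℝ) * hpow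

lemma monotoneOn_kappaQuad (hp : p ≠ 0) (hp2 : p ≤ 2) (ht : 0 ≤ t) :
    MonotoneOn (kappaQuad p t) (Ici t ∩ Ioi 0) := by
  have hderiv : ∀ x ∈ Ioi (0 : ℝ), HasDerivAt (kappaQuad p t) _ x :=
    fun x hx => hasDerivAt_kappaQuad (t := t) hp hx
  refine monotoneOn_of_hasDerivWithinAt_nonneg ((convex_Ici t).inter (convex_Ioi 0))
    (fun x hx => (hderiv x hx.2).continuousAt.continuousWithinAt)
    (fun x hx => (hderiv x (interior_subset hx).2).hasDerivWithinAt) ?_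
  intro x hx
  rw [interior_inter, interior_Ici, interior_Ioi] at hx
  have hsq : t ^ 2 ≤ x ^ 2 := pow_le_pow_left₀ ht hx.1.le 2
  exact mul_nonneg (by linarith) (mul_nonneg (Real.rpow_nonneg hx.2.le _) (sub_nonneg.2 hsq))

lemma antitoneOn_kappaQuad (hp : p ≠ 0) (hp2 : p ≤ 2) :
    AntitoneOn (kappaQuad p t) (Ioc 0 t) := by
  have hderiv : ∀ x ∈ Ioi (0 : ℝ), HasDerivAt (kappaQuad p t) _ x :=
    fun x hx => hasDerivAt_kappaQuad (t := t) hp hx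
  refine antitoneOn_of_hasDerivWithinAt_nonpos (convex_Ioc 0 t)
    (fun x hx => (hderiv x hx.1).continuousAt.continuousWithinAt)
    (fun x hx => (hderiv x (interior_subset hx).1).hasDerivWithinAt) ?_
  intro x hx
  rw [interior_Ioc] at hx
  have hsq : x ^ 2 ≤ t ^ 2 := pow_le_pow_left₀ hx.1.le hx.2.le 2
  exact mul_nonpos_of_nonneg_of_nonpos (by linarith)
    (mul_nonpos_of_nonneg_of_nonpos (Real.rpow_nonneg hx.1.le _) (sub_nonpos.2 hsq))

lemma kappaQuad_le_of_between (hp : p ≠ 0) (hp2 : p ≤ 2) (ht : 0 ≤ t) {y : ℝ}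
    (hx : 0 < x) (hy : 0 < y) (hxy : t ≤ x ∧ x ≤ y ∨ y ≤ x ∧ x ≤ t) :
    kappaQuad p t x ≤ kappaQuad p t y := by
  rcases hxy with ⟨htx, hxy⟩ | ⟨hyx, hxt⟩
  · exact monotoneOn_kappaQuad hp hp2 ht ⟨htx, hx⟩ ⟨htx.trans hxy, hy⟩ hxy
  · exact antitoneOn_kappaQuad hp hp2 ⟨hy, hyx.trans hxt⟩ ⟨hx, hxt⟩ hyx

end kappaQuad

lemma kappaEps_eq_kappaQuad_clamp {p a b t : ℝ} (ha : 0 < a) (hab : a ≤ b) :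
    kappaEps p a b t = kappaQuad p t (max a (min b t)) := by
  unfold kappaEps
  split_ifs with hta htb
  · rw [min_eq_right (hta.trans hab), max_eq_left hta]; rfl
  · have hat : a < t := not_le.1 hta
    rw [min_eq_right htb, max_eq_right hat.le, kappaQuad_self (ha.trans hat)]
  · rw [min_eq_left (not_le.1 htb).le, max_eq_right hab]; rfl

lemma clamp_between_of_Icc_subset {a b c d t : ℝ} (hac : a ≤ c) (hcd : c ≤ d) (hdb : d ≤ b) :
    t ≤ max a (min b t) ∧ max a (min b t) ≤ max c (min d t) ∨
      max c (min d t) ≤ max a (min b t) ∧ max a (min b t) ≤ t := by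
  grind

theorem stmt_9 (p ηm εm εp ηp : ℝ) (hp1 : 1 < p) (hp2 : p ≤ 2)
    (hηm : 0 < ηm) (h1 : ηm ≤ εm) (h2 : εm ≤ εp) (h3 : εp ≤ ηp) :
    ∀ t : ℝ, 0 ≤ t → kappaEps p ηm ηp t ≤ kappaEps p εm εp t := by
  intro t ht
  have hεm : 0 < εm := hηm.trans_le h1
  rw [kappaEps_eq_kappaQuad_clamp hηm (h1.trans (h2.trans h3)),
    kappaEps_eq_kappaQuad_clamp hεm h2]
  exact kappaQuad_le_of_between (zero_lt_one.trans hp1).ne' hp2 ht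
    (hηm.trans_le (le_max_left _ _)) (hεm.trans_le (le_max_left _ _))
    (clamp_between_of_Icc_subset h1 h2 h3)
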